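/- arXiv:math/9809084 — 8 statements merged into one kernel-verified Lean document; each statement's English description precedes it below -/
import Mathlib

section
/- Let k be a commutative ring, A an associative unital k-algebra, and e = Σ e¹⊗e² ∈ A⊗A an A-central element, i.e. (a⊗1)·e = e·(1⊗a) in A⊗A for all a ∈ A. Then in A⊗A⊗A one has e¹²e²³ = e²³e¹³ = e¹³e¹², i.e. e is a solution of the FS-equation. -/
/-!
Applying centrality of `e` inside the last two tensor factors gives `x¹² e²³ = e²³ x¹³` for every
`x ∈ A ⊗ A`; applying it inside the first two factors, and using that `e¹²` commutes with
`1 ⊗ 1 ⊗ b`, gives `x¹³ e¹² = e¹² x²³`. Taking `x = e` in both identities yields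
`e¹² e²³ = e²³ e¹³` and `e¹³ e¹² = e¹² e²³`.
-/

open TensorProduct

variable {k A : Type*} [CommRing k] [Ring A] [Algebra k A]

/-- The map `A ⊗ A → A ⊗ A ⊗ A`, `x ⊗ y ↦ x ⊗ y ⊗ 1`. -/
noncomputable def leg12 : A ⊗[k] A →ₐ[k] A ⊗[k] (A ⊗[k] A) :=
  Algebra.TensorProduct.map (AlgHom.id k A) Algebra.TensorProduct.includeLeft

/-- The map `A ⊗ A → A ⊗ A ⊗ A`, `x ⊗ y ↦ x ⊗ 1 ⊗ y`. -/
noncomputable def leg13 : A ⊗[k] A →ₐ[k] A ⊗[k] (A ⊗[k] A) :=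
  Algebra.TensorProduct.map (AlgHom.id k A) Algebra.TensorProduct.includeRight

/-- The map `A ⊗ A → A ⊗ A ⊗ A`, `x ⊗ y ↦ 1 ⊗ x ⊗ y`. -/
noncomputable def leg23 : A ⊗[k] A →ₐ[k] A ⊗[k] (A ⊗[k] A) :=
  Algebra.TensorProduct.includeRight

open Algebra.TensorProduct (tmul_mul_tmul)

@[simp]
lemma leg12_tmul (x y : A) : leg12 (x ⊗ₜ[k] y) = x ⊗ₜ[k] (y ⊗ₜ[k] (1 : A)) := by
  simp [leg12]

@[simp]
lemma leg13_tmul (x y : A) : leg13 (x ⊗ₜ[k] y) = x ⊗ₜ[k] ((1 : A) ⊗ₜ[k] y) := by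
  simp [leg13]

@[simp]
lemma leg23_apply (z : A ⊗[k] A) : leg23 z = (1 : A) ⊗ₜ[k] z := rfl

lemma commute_leg12_one_tmul_one_tmul (x : A ⊗[k] A) (b : A) :
    Commute (leg12 x) ((1 : A) ⊗ₜ[k] ((1 : A) ⊗ₜ[k] b)) := by
  induction x using TensorProduct.induction_on with
  | zero => simp
  | tmul x y => simp [Commute, SemiconjBy, tmul_mul_tmul]
  | add u v hu hv => rw [map_add]; exact hu.add_left hv

lemma leg12_mul_leg23_eq_leg23_mul_leg13 {e : A ⊗[k] A}
    (he : ∀ a : A, (a ⊗ₜ[k] (1 : A)) * e = e * ((1 : A) ⊗ₜ[k] a)) (x : A ⊗[k] A) :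
    leg12 x * leg23 e = leg23 e * leg13 x := by
  induction x using TensorProduct.induction_on with
  | zero => simp
  | tmul a b =>
    simp only [leg12_tmul, leg13_tmul, leg23_apply, tmul_mul_tmul, mul_one, one_mul, he]
  | add u v hu hv => rw [map_add, map_add, add_mul, mul_add, hu, hv]

lemma leg13_mul_leg12_eq_leg12_mul_leg23 {e : A ⊗[k] A}
    (he : ∀ a : A, (a ⊗ₜ[k] (1 : A)) * e = e * ((1 : A) ⊗ₜ[k] a)) (x : A ⊗[k] A) :
    leg13 x * leg12 e = leg12 e * leg23 x := by
  induction x using TensorProduct.induction_on with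
  | zero => simp
  | tmul a b =>
    set t : A ⊗[k] (A ⊗[k] A) := (1 : A) ⊗ₜ[k] ((1 : A) ⊗ₜ[k] b)
    have h13 : leg13 (a ⊗ₜ[k] b) = leg12 (a ⊗ₜ[k] (1 : A)) * t := by simp [t, tmul_mul_tmul]
    have h23 : leg23 (a ⊗ₜ[k] b) = leg12 ((1 : A) ⊗ₜ[k] a) * t := by simp [t, tmul_mul_tmul]
    calc leg13 (a ⊗ₜ[k] b) * leg12 e
        = leg12 (a ⊗ₜ[k] (1 : A)) * leg12 e * t := by
          rw [h13, mul_assoc, ← (commute_leg12_one_tmul_one_tmul e b).eq, mul_assoc]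
      _ = leg12 (e * ((1 : A) ⊗ₜ[k] a)) * t := by rw [← map_mul, he]
      _ = leg12 e * leg23 (a ⊗ₜ[k] b) := by rw [map_mul, mul_assoc, h23]
  | add u v hu hv => rw [map_add, map_add, add_mul, mul_add, hu, hv]

/-- An `A`-central element `e ∈ A ⊗ A` is a solution of the FS-equation
`e¹²e²³ = e²³e¹³ = e¹³e¹²`. -/
theorem central_element_satisfies_FS_equation
    (e : A ⊗[k] A)
    (he : ∀ a : A, (a ⊗ₜ[k] (1 : A)) * e = e * ((1 : A) ⊗ₜ[k] a)) :
    leg12 e * leg23 e = leg23 e * leg13 e ∧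
      leg23 e * leg13 e = leg13 e * leg12 e :=
  ⟨leg12_mul_leg23_eq_leg23_mul_leg13 he e,
    (leg12_mul_leg23_eq_leg23_mul_leg13 he e).symm.trans
      (leg13_mul_leg12_eq_leg12_mul_leg23 he e).symm⟩
end

section
/- Let k be a commutative ring, A an associative unital k-algebra, and Δ: A → A⊗A a k-linear map which is an A-bimodule map, i.e. Δ(ab) = (a⊗1)·Δ(b) = Δ(a)·(1⊗b) for all a,b ∈ A (where A⊗A has the A-bimodule structure a·(x⊗y)·b = ax⊗yb). Then Δ is coassociative: (Δ⊗I_A)∘Δ = (I_A⊗Δ)∘Δ as maps A → A⊗A⊗A. -/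
open TensorProduct

/-- If `Δ : A → A ⊗ A` is an `A`-bimodule map, then `Δ` is coassociative. -/
theorem bimodule_comul_coassoc
    {k A : Type*} [CommRing k] [Ring A] [Algebra k A]
    (Δ : A →ₗ[k] A ⊗[k] A)
    (hleft : ∀ a b : A, Δ (a * b) = (a ⊗ₜ[k] (1 : A)) * Δ b)
    (hright : ∀ a b : A, Δ (a * b) = Δ a * ((1 : A) ⊗ₜ[k] b)) :
    ∀ a : A,
      (TensorProduct.assoc k A A A) ((TensorProduct.map Δ LinearMap.id) (Δ a)) =
        (TensorProduct.map LinearMap.id Δ) (Δ a) := by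
  intro a
  -- the auxiliary "bilinear" map B s t, with B (x⊗y) (u⊗v) = x ⊗ (y*u ⊗ v)
  set B : A ⊗[k] A → (A ⊗[k] A →ₗ[k] A ⊗[k] (A ⊗[k] A)) := fun s =>
    (TensorProduct.assoc k A A A).toLinearMap ∘ₗ
      TensorProduct.map
        ((LinearMap.mulLeft k s) ∘ₗ
          (Algebra.TensorProduct.includeRight : A →ₐ[k] A ⊗[k] A).toLinearMap)
        LinearMap.id with hB
  have hBpure : ∀ (s : A ⊗[k] A) (u v : A),
      B s (u ⊗ₜ[k] v) =
        (TensorProduct.assoc k A A A) ((s * ((1 : A) ⊗ₜ[k] u)) ⊗ₜ[k] v) := by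
    intro s u v
    simp [hB]
  have hBadd : ∀ (s₁ s₂ t : A ⊗[k] A), B (s₁ + s₂) t = B s₁ t + B s₂ t := by
    intro s₁ s₂ t
    induction t using TensorProduct.induction_on with
    | zero => simp
    | tmul u v =>
        rw [hBpure, hBpure, hBpure, add_mul, add_tmul, map_add]
    | add t₁ t₂ h1 h2 =>
        rw [map_add, map_add, map_add, h1, h2]
        abel
  have hB2 : ∀ (x y : A) (t : A ⊗[k] A),
      B (x ⊗ₜ[k] y) t = x ⊗ₜ[k] ((y ⊗ₜ[k] (1 : A)) * t) := by
    intro x y t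
    induction t using TensorProduct.induction_on with
    | zero => simp
    | tmul u v =>
        rw [hBpure]
        simp [Algebra.TensorProduct.tmul_mul_tmul]
    | add t₁ t₂ h1 h2 =>
        rw [map_add, h1, h2, mul_add, tmul_add]
  -- claim 2: (id ⊗ Δ) s = B s (Δ 1) for every s
  have claim2 : ∀ s : A ⊗[k] A,
      (TensorProduct.map LinearMap.id Δ) s = B s (Δ 1) := by
    intro s
    induction s using TensorProduct.induction_on with
    | zero => simp [hB]
    | tmul x y =>
        rw [hB2]
        have h := hleft y 1
        rw [mul_one] at h
        rw [← h]
        simp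
    | add s₁ s₂ h1 h2 =>
        rw [map_add, h1, h2, hBadd]
  -- claim 1: assoc ((Δ ⊗ id) ((a ⊗ 1) * t)) = B (Δ a) t for every t
  have claim1 : ∀ t : A ⊗[k] A,
      (TensorProduct.assoc k A A A)
          ((TensorProduct.map Δ LinearMap.id) ((a ⊗ₜ[k] (1 : A)) * t)) =
        B (Δ a) t := by
    intro t
    induction t using TensorProduct.induction_on with
    | zero => simp
    | tmul u v =>
        rw [hBpure, ← hright a u]
        simp [Algebra.TensorProduct.tmul_mul_tmul]
    | add t₁ t₂ h1 h2 =>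
        rw [mul_add, map_add, map_add, h1, h2, map_add]
  have ha : Δ a = (a ⊗ₜ[k] (1 : A)) * Δ 1 := by
    have h := hleft a 1
    rwa [mul_one] at h
  calc (TensorProduct.assoc k A A A) ((TensorProduct.map Δ LinearMap.id) (Δ a))
      = (TensorProduct.assoc k A A A)
          ((TensorProduct.map Δ LinearMap.id) ((a ⊗ₜ[k] (1 : A)) * Δ 1)) := by rw [← ha]
    _ = B (Δ a) (Δ 1) := claim1 (Δ 1)
    _ = (TensorProduct.map LinearMap.id Δ) (Δ a) := (claim2 (Δ a)).symm
end

section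
/- Let k be a commutative ring, A an associative unital k-algebra, Δ: A → A⊗A an A-bimodule map (i.e. Δ(ab) = (a⊗1)·Δ(b) = Δ(a)·(1⊗b) for all a,b ∈ A), and ε: A → k a k-linear map which is a counit for Δ, i.e. (ε⊗I_A)∘Δ = (I_A⊗ε)∘Δ = I_A (after the canonical identifications k⊗A ≅ A ≅ A⊗k). Then A is finitely generated and projective as a k-module. -/
open TensorProduct

/-! Write `Δ 1 = ∑ xᵢ ⊗ yᵢ`. Right `A`-linearity gives `Δ a = ∑ xᵢ ⊗ yᵢ a`, and the right counit
law turns this into `a = ∑ ε (yᵢ a) • xᵢ`. So the `xᵢ` and the functionals `ε (yᵢ · )` form a finite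
dual basis of `A`, which makes `A` a direct summand of a finite free `k`-module. -/

theorem Module.finite_and_projective_of_sum_smul_eq {R M ι : Type*} [Semiring R]
    [AddCommMonoid M] [Module R M] (s : Finset ι) (x : ι → M) (f : ι → M →ₗ[R] R)
    (h : ∀ m, ∑ i ∈ s, f i m • x i = m) :
    Module.Finite R M ∧ Module.Projective R M := by
  let coord : M →ₗ[R] s → R := LinearMap.pi fun i ↦ f i
  let combine : (s → R) →ₗ[R] M := ∑ i : s, (LinearMap.proj i).smulRight (x i)
  have hsplit : combine ∘ₗ coord = LinearMap.id := by
    ext m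
    simpa [combine, coord, Finset.sum_attach s (fun i ↦ f i m • x i)] using h m
  have hsurj : Function.Surjective combine := fun m ↦ ⟨coord m, congr($hsplit m)⟩
  exact ⟨.of_surjective combine hsurj, .of_split coord combine hsplit⟩

theorem comul_eq_sum_tmul_mul {k A : Type*} [CommSemiring k] [Semiring A] [Algebra k A]
    (Δ : A →ₗ[k] A ⊗[k] A) (hright : ∀ a b : A, Δ (a * b) = Δ a * ((1 : A) ⊗ₜ[k] b))
    {S : Finset (A × A)} (hS : Δ 1 = ∑ p ∈ S, p.1 ⊗ₜ[k] p.2) (a : A) :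
    Δ a = ∑ p ∈ S, p.1 ⊗ₜ[k] (p.2 * a) := by
  rw [← one_mul a, hright, hS, Finset.sum_mul]
  simp_rw [Algebra.TensorProduct.tmul_mul_tmul, one_mul, mul_one]

theorem sum_counit_smul_eq {k A : Type*} [CommSemiring k] [Semiring A] [Algebra k A]
    (Δ : A →ₗ[k] A ⊗[k] A) (ε : A →ₗ[k] k)
    (hright : ∀ a b : A, Δ (a * b) = Δ a * ((1 : A) ⊗ₜ[k] b))
    (hcounitr : ∀ a : A,
      (TensorProduct.rid k A) ((TensorProduct.map LinearMap.id ε) (Δ a)) = a)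
    {S : Finset (A × A)} (hS : Δ 1 = ∑ p ∈ S, p.1 ⊗ₜ[k] p.2) (a : A) :
    ∑ p ∈ S, ε (p.2 * a) • p.1 = a := by
  simpa [comul_eq_sum_tmul_mul Δ hright hS] using hcounitr a

theorem counit_bimodule_comul_implies_finite_projective_general
    {k A : Type*} [CommRing k] [Ring A] [Algebra k A]
    (Δ : A →ₗ[k] A ⊗[k] A) (ε : A →ₗ[k] k)
    (hright : ∀ a b : A, Δ (a * b) = Δ a * ((1 : A) ⊗ₜ[k] b))
    (hcounitr : ∀ a : A,
      (TensorProduct.rid k A) ((TensorProduct.map LinearMap.id ε) (Δ a)) = a) :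
    Module.Finite k A ∧ Module.Projective k A := by
  obtain ⟨S, hS⟩ := TensorProduct.exists_finset (Δ 1)
  exact Module.finite_and_projective_of_sum_smul_eq S Prod.fst
    (fun p ↦ ε ∘ₗ LinearMap.mulLeft k p.2) (sum_counit_smul_eq Δ ε hright hcounitr hS)

/-- If `A` has a coalgebra structure `(Δ, ε)` whose comultiplication `Δ` is an
`A`-bimodule map, then `A` is finitely generated and projective as a `k`-module. -/
theorem counit_bimodule_comul_implies_finite_projective
    {k A : Type*} [CommRing k] [Ring A] [Algebra k A]
    (Δ : A →ₗ[k] A ⊗[k] A) (ε : A →ₗ[k] k)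
    (hleft : ∀ a b : A, Δ (a * b) = (a ⊗ₜ[k] (1 : A)) * Δ b)
    (hright : ∀ a b : A, Δ (a * b) = Δ a * ((1 : A) ⊗ₜ[k] b))
    (hcounitl : ∀ a : A,
      (TensorProduct.lid k A) ((TensorProduct.map ε LinearMap.id) (Δ a)) = a)
    (hcounitr : ∀ a : A,
      (TensorProduct.rid k A) ((TensorProduct.map LinearMap.id ε) (Δ a)) = a) :
    Module.Finite k A ∧ Module.Projective k A :=
  counit_bimodule_comul_implies_finite_projective_general Δ ε hright hcounitr
end

section
/- Let k be a commutative ring and A an associative unital k-algebra. Then A is a Frobenius algebra (i.e. A is finitely generated projective as a k-module and there exists a k-linear isomorphism φ: A → Hom_k(A,k) satisfying φ(ab)(x) = φ(b)(xa) for all a,b,x ∈ A) if and only if there exists a coassociative counital k-coalgebra structure (Δ, ε) on A such that the comultiplication Δ: A → A⊗A is an A-bimodule map, i.e. Δ(ab) = (a⊗1)·Δ(b) = Δ(a)·(1⊗b) for all a,b ∈ A. -/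
open TensorProduct

section FrobeniusAux

variable {k A : Type*} [CommRing k] [Ring A] [Algebra k A]

private lemma frob_exists_dual_basis [Module.Finite k A] [Module.Projective k A] :
    ∃ (n : ℕ) (e : Fin n → A) (g : Fin n → (A →ₗ[k] k)),
      ∀ x : A, ∑ i, g i x • e i = x := by
  obtain ⟨n, π, hπ⟩ := Module.Finite.exists_fin' k A
  obtain ⟨σ, hσ⟩ := Module.projective_lifting_property π LinearMap.id hπ
  refine ⟨n, fun i => π (Pi.single i 1), fun i => (LinearMap.proj i).comp σ, fun x => ?_⟩
  have h1 : ∀ i : Fin n, ((LinearMap.proj i).comp σ) x • π (Pi.single i (1:k))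
      = π (Pi.single i (σ x i)) := by
    intro i
    rw [← map_smul, ← Pi.single_smul, smul_eq_mul, mul_one]
    rfl
  calc ∑ i, ((LinearMap.proj i).comp σ) x • π (Pi.single i 1)
      = ∑ i, π (Pi.single i (σ x i)) := Finset.sum_congr rfl fun i _ => h1 i
    _ = π (∑ i, Pi.single i (σ x i)) := (map_sum π _ _).symm
    _ = π (σ x) := by rw [Finset.univ_sum_single]
    _ = x := DFunLike.congr_fun hσ x

private lemma frob_casimir {n : ℕ} (e f : Fin n → A) (ε : A →ₗ[k] k)
    (hL : ∀ x : A, ∑ i, ε (x * f i) • e i = x)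
    (hR : ∀ x : A, ∑ i, ε (e i * x) • f i = x) (z : A) :
    ∑ i, (z * f i) ⊗ₜ[k] (e i) = ∑ i, (f i) ⊗ₜ[k] (e i * z) := by
  calc ∑ i, (z * f i) ⊗ₜ[k] (e i)
      = ∑ i, (∑ j, ε (e j * (z * f i)) • f j) ⊗ₜ[k] (e i) :=
        Finset.sum_congr rfl fun i _ => by rw [hR (z * f i)]
    _ = ∑ i, ∑ j, ε (e j * z * f i) • (f j ⊗ₜ[k] e i) := by
        simp only [TensorProduct.sum_tmul, smul_tmul', mul_assoc]
    _ = ∑ j, ∑ i, f j ⊗ₜ[k] (ε (e j * z * f i) • e i) := by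
        rw [Finset.sum_comm]
        simp only [smul_tmul', smul_tmul]
    _ = ∑ j, f j ⊗ₜ[k] (∑ i, ε (e j * z * f i) • e i) := by
        simp only [TensorProduct.tmul_sum]
    _ = ∑ j, f j ⊗ₜ[k] (e j * z) :=
        Finset.sum_congr rfl fun j _ => by rw [hL (e j * z)]

end FrobeniusAux

/-- A `k`-algebra `A` is Frobenius if and only if there is a coassociative counital
coalgebra structure `(Δ, ε)` on `A` such that `Δ` is an `A`-bimodule map. -/
theorem frobenius_iff_bimodule_coalgebra
    (k A : Type*) [CommRing k] [Ring A] [Algebra k A] :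
    (Module.Finite k A ∧ Module.Projective k A ∧
      ∃ φ : A ≃ₗ[k] (A →ₗ[k] k), ∀ a b x : A, φ (a * b) x = φ b (x * a)) ↔
    (∃ (Δ : A →ₗ[k] A ⊗[k] A) (ε : A →ₗ[k] k),
      (∀ a : A,
        (TensorProduct.assoc k A A A) ((TensorProduct.map Δ LinearMap.id) (Δ a)) =
          (TensorProduct.map LinearMap.id Δ) (Δ a)) ∧
      (∀ a : A,
        (TensorProduct.lid k A) ((TensorProduct.map ε LinearMap.id) (Δ a)) = a) ∧
      (∀ a : A,
        (TensorProduct.rid k A) ((TensorProduct.map LinearMap.id ε) (Δ a)) = a) ∧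
      (∀ a b : A, Δ (a * b) = (a ⊗ₜ[k] (1 : A)) * Δ b) ∧
      (∀ a b : A, Δ (a * b) = Δ a * ((1 : A) ⊗ₜ[k] b))) := by
  constructor
  · rintro ⟨hfin, hproj, φ, hφ⟩
    obtain ⟨n, e, g, hg⟩ := frob_exists_dual_basis (k := k) (A := A)
    set ε : A →ₗ[k] k := φ 1 with hεdef
    have hφε : ∀ a x : A, φ a x = ε (x * a) := by
      intro a x
      have h := hφ a 1 x
      rw [mul_one] at h
      rw [h, hεdef]
    set f : Fin n → A := fun i => φ.symm (g i) with hfdef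
    have hL : ∀ x : A, ∑ i, ε (x * f i) • e i = x := by
      intro x
      have h : ∀ i, ε (x * f i) = g i x := by
        intro i
        rw [← hφε (f i) x, hfdef]
        simp
      simp only [h]
      exact hg x
    have hR : ∀ x : A, ∑ i, ε (e i * x) • f i = x := by
      intro x
      apply φ.injective
      apply LinearMap.ext
      intro y
      rw [hφε x y]
      calc φ (∑ i, ε (e i * x) • f i) y
          = ∑ i, ε (e i * x) * ε (y * f i) := by
            rw [map_sum, LinearMap.sum_apply]
            refine Finset.sum_congr rfl fun i _ => ?_
            rw [map_smul, LinearMap.smul_apply, smul_eq_mul, hφε (f i) y]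
        _ = ∑ i, ε ((ε (y * f i) • e i) * x) := by
            refine Finset.sum_congr rfl fun i _ => ?_
            rw [smul_mul_assoc, map_smul, smul_eq_mul, mul_comm]
        _ = ε ((∑ i, ε (y * f i) • e i) * x) := by rw [← map_sum, ← Finset.sum_mul]
        _ = ε (y * x) := by rw [hL y]
    -- the comultiplication
    set Δ : A →ₗ[k] A ⊗[k] A :=
      ∑ i, (TensorProduct.mk k A A (f i)).comp (LinearMap.mulLeft k (e i)) with hΔdef
    have hΔ : ∀ a : A, Δ a = ∑ i, (f i) ⊗ₜ[k] (e i * a) := by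
      intro a
      rw [hΔdef]
      simp [LinearMap.sum_apply, LinearMap.mulLeft_apply]
    have hC : ∀ z : A, ∑ i, (z * f i) ⊗ₜ[k] (e i) = ∑ i, (f i) ⊗ₜ[k] (e i * z) :=
      frob_casimir e f ε hL hR
    have hC2 : ∀ z b : A,
        ∑ i, (z * f i) ⊗ₜ[k] (e i * b) = ∑ i, (f i) ⊗ₜ[k] (e i * (z * b)) := by
      intro z b
      have h := congrArg (TensorProduct.map (LinearMap.id (R := k) (M := A))
        (LinearMap.mulRight k b)) (hC z)
      rw [map_sum, map_sum] at h
      simp only [TensorProduct.map_tmul, LinearMap.id_apply,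
        LinearMap.mulRight_apply] at h
      rw [h]
      simp only [mul_assoc]
    refine ⟨Δ, ε, ?_, ?_, ?_, ?_, ?_⟩
    · -- coassociativity
      intro a
      have expandL : (TensorProduct.assoc k A A A)
          ((TensorProduct.map Δ LinearMap.id) (Δ a))
          = ∑ i, ∑ j, (f j) ⊗ₜ[k] ((e j * f i) ⊗ₜ[k] (e i * a)) := by
        rw [hΔ a, map_sum, map_sum]
        refine Finset.sum_congr rfl fun i _ => ?_
        rw [TensorProduct.map_tmul, hΔ (f i), LinearMap.id_apply,
          TensorProduct.sum_tmul, map_sum]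
        exact Finset.sum_congr rfl fun j _ => by rw [TensorProduct.assoc_tmul]
      have expandR : (TensorProduct.map LinearMap.id Δ) (Δ a)
          = ∑ i, ∑ j, (f i) ⊗ₜ[k] ((f j) ⊗ₜ[k] (e j * (e i * a))) := by
        rw [hΔ a, map_sum]
        refine Finset.sum_congr rfl fun i _ => ?_
        rw [TensorProduct.map_tmul, hΔ (e i * a), LinearMap.id_apply,
          TensorProduct.tmul_sum]
      rw [expandL, expandR, Finset.sum_comm]
      refine Finset.sum_congr rfl fun j _ => ?_
      rw [← TensorProduct.tmul_sum, ← TensorProduct.tmul_sum]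
      congr 1
      exact hC2 (e j) a
    · -- left counit
      intro a
      rw [hΔ a, map_sum, map_sum]
      have h : ∀ i : Fin n, (TensorProduct.lid k A)
          ((TensorProduct.map ε LinearMap.id) ((f i) ⊗ₜ[k] (e i * a)))
          = (ε (f i) • e i) * a := by
        intro i
        rw [TensorProduct.map_tmul, LinearMap.id_apply, TensorProduct.lid_tmul,
          smul_mul_assoc]
      rw [Finset.sum_congr rfl fun i _ => h i, ← Finset.sum_mul]
      have h1 : ∑ i, ε (f i) • e i = 1 := by
        have := hL 1
        simpa using this
      rw [h1, one_mul]
    · -- right counit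
      intro a
      rw [hΔ a, map_sum, map_sum]
      have h : ∀ i : Fin n, (TensorProduct.rid k A)
          ((TensorProduct.map LinearMap.id ε) ((f i) ⊗ₜ[k] (e i * a)))
          = ε (e i * a) • f i := by
        intro i
        rw [TensorProduct.map_tmul, LinearMap.id_apply, TensorProduct.rid_tmul]
      rw [Finset.sum_congr rfl fun i _ => h i]
      exact hR a
    · -- left bimodule property
      intro a b
      rw [hΔ (a * b), hΔ b, Finset.mul_sum]
      have h : ∀ i : Fin n, (a ⊗ₜ[k] (1:A)) * ((f i) ⊗ₜ[k] (e i * b))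
          = (a * f i) ⊗ₜ[k] (e i * b) := by
        intro i
        rw [Algebra.TensorProduct.tmul_mul_tmul, one_mul]
      rw [Finset.sum_congr rfl fun i _ => h i]
      exact (hC2 a b).symm
    · -- right bimodule property
      intro a b
      rw [hΔ (a * b), hΔ a, Finset.sum_mul]
      refine Finset.sum_congr rfl fun i _ => ?_
      rw [Algebra.TensorProduct.tmul_mul_tmul, mul_one, mul_assoc]
  · rintro ⟨Δ, ε, _hco, hl, hr, hbl, hbr⟩
    obtain ⟨S, hS⟩ := TensorProduct.exists_finset (Δ (1 : A))
    have hΔl : ∀ a : A, Δ a = ∑ p ∈ S, (a * p.1) ⊗ₜ[k] p.2 := by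
      intro a
      conv_lhs => rw [← mul_one a]
      rw [hbl a 1, hS, Finset.mul_sum]
      exact Finset.sum_congr rfl fun p _ => by
        rw [Algebra.TensorProduct.tmul_mul_tmul, one_mul]
    have hΔr : ∀ a : A, Δ a = ∑ p ∈ S, p.1 ⊗ₜ[k] (p.2 * a) := by
      intro a
      conv_lhs => rw [← one_mul a]
      rw [hbr 1 a, hS, Finset.sum_mul]
      exact Finset.sum_congr rfl fun p _ => by
        rw [Algebra.TensorProduct.tmul_mul_tmul, mul_one]
    have hL : ∀ a : A, ∑ p ∈ S, ε (a * p.1) • p.2 = a := by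
      intro a
      have h := hl a
      rw [hΔl a, map_sum, map_sum] at h
      simpa using h
    have hR : ∀ a : A, ∑ p ∈ S, ε (p.2 * a) • p.1 = a := by
      intro a
      have h := hr a
      rw [hΔr a, map_sum, map_sum] at h
      simpa using h
    -- the splitting of A as a retract of a finite free module
    set σ : A →ₗ[k] (S → k) :=
      LinearMap.pi (fun p => ε.comp (LinearMap.mulRight k (p : A × A).1)) with hσdef
    set π : (S → k) →ₗ[k] A :=
      ∑ p : S, (LinearMap.toSpanSingleton k A (p : A × A).2).comp (LinearMap.proj p)
      with hπdef
    have hπσ : ∀ x : A, π (σ x) = x := by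
      intro x
      rw [hπdef]
      simp only [LinearMap.sum_apply, LinearMap.comp_apply, LinearMap.proj_apply,
        LinearMap.toSpanSingleton_apply, hσdef, LinearMap.pi_apply,
        LinearMap.mulRight_apply]
      rw [Finset.sum_coe_sort S (fun p => ε (x * p.1) • p.2)]
      exact hL x
    have hfin : Module.Finite k A :=
      Module.Finite.of_surjective π (fun x => ⟨σ x, hπσ x⟩)
    have hproj : Module.Projective k A :=
      Module.Projective.of_split σ π (LinearMap.ext hπσ)
    -- the Frobenius isomorphism
    set φ₀ : A →ₗ[k] (A →ₗ[k] k) :=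
      LinearMap.mk₂ k (fun a x => ε (x * a))
        (fun a b x => by
          change ε (x * (a + b)) = ε (x * a) + ε (x * b)
          rw [mul_add, map_add])
        (fun c a x => by
          change ε (x * (c • a)) = c • ε (x * a)
          rw [mul_smul_comm, map_smul])
        (fun a x y => by
          change ε ((x + y) * a) = ε (x * a) + ε (y * a)
          rw [add_mul, map_add])
        (fun c a x => by
          change ε ((c • x) * a) = c • ε (x * a)
          rw [smul_mul_assoc, map_smul]) with hφ₀def
    have hφ₀ : ∀ a x : A, φ₀ a x = ε (x * a) := fun a x => rfl
    set ψ : (A →ₗ[k] k) →ₗ[k] A :=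
      ∑ p ∈ S, (LinearMap.toSpanSingleton k A p.1).comp (LinearMap.applyₗ p.2)
      with hψdef
    have hψ : ∀ g : A →ₗ[k] k, ψ g = ∑ p ∈ S, g p.2 • p.1 := by
      intro g
      rw [hψdef]
      simp [LinearMap.sum_apply]
    have h1 : φ₀ ∘ₗ ψ = LinearMap.id := by
      apply LinearMap.ext
      intro g
      apply LinearMap.ext
      intro x
      simp only [LinearMap.comp_apply, LinearMap.id_apply, hψ g, hφ₀]
      rw [Finset.mul_sum, map_sum]
      calc ∑ p ∈ S, ε (x * (g p.2 • p.1))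
          = ∑ p ∈ S, g (ε (x * p.1) • p.2) := by
            refine Finset.sum_congr rfl fun p _ => ?_
            rw [mul_smul_comm, map_smul, map_smul, smul_eq_mul, smul_eq_mul, mul_comm]
        _ = g (∑ p ∈ S, ε (x * p.1) • p.2) := (map_sum g _ _).symm
        _ = g x := by rw [hL x]
    have h2 : ψ ∘ₗ φ₀ = LinearMap.id := by
      apply LinearMap.ext
      intro a
      simp only [LinearMap.comp_apply, LinearMap.id_apply, hψ (φ₀ a), hφ₀]
      exact hR a
    refine ⟨hfin, hproj, LinearEquiv.ofLinear φ₀ ψ h1 h2, fun a b x => ?_⟩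
    show φ₀ (a * b) x = φ₀ b (x * a)
    rw [hφ₀, hφ₀, mul_assoc]
end

section
/- Let k be a commutative ring, A an associative unital k-algebra, and (e, ε) a Frobenius pair for A: e = Σ e¹⊗e² ∈ A⊗A satisfies (a⊗1)·e = e·(1⊗a) for all a ∈ A, and ε: A → k is k-linear with Σ ε(e¹)e² = Σ e¹ε(e²) = 1_A. Define the characteristic element ω := Σ e¹e² ∈ A. If ω is invertible in A, then A is separable, i.e. there exists f = Σ f¹⊗f² ∈ A⊗A with (a⊗1)·f = f·(1⊗a) for all a ∈ A and Σ f¹f² = 1_A (one may take f = ω⁻¹·e). -/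
open TensorProduct

private lemma mul'_left_mul {k A : Type*} [CommRing k] [Ring A] [Algebra k A]
    (a : A) (x : A ⊗[k] A) :
    LinearMap.mul' k A ((a ⊗ₜ[k] (1 : A)) * x) = a * LinearMap.mul' k A x := by
  induction x using TensorProduct.induction_on with
  | zero => simp
  | tmul p q => simp [Algebra.TensorProduct.tmul_mul_tmul, mul_assoc]
  | add x y hx hy => simp [mul_add, hx, hy]

private lemma mul'_right_mul {k A : Type*} [CommRing k] [Ring A] [Algebra k A]
    (a : A) (x : A ⊗[k] A) :
    LinearMap.mul' k A (x * ((1 : A) ⊗ₜ[k] a)) = LinearMap.mul' k A x * a := by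
  induction x using TensorProduct.induction_on with
  | zero => simp
  | tmul p q => simp [Algebra.TensorProduct.tmul_mul_tmul, mul_assoc]
  | add x y hx hy => simp [add_mul, hx, hy]

/-- If `(e, ε)` is a Frobenius pair for `A` and the characteristic element
`ω = Σ e¹e²` is invertible in `A`, then `A` is separable. -/
theorem frobenius_pair_invertible_characteristic_implies_separable
    {k A : Type*} [CommRing k] [Ring A] [Algebra k A]
    (e : A ⊗[k] A) (ε : A →ₗ[k] k)
    (he : ∀ a : A, (a ⊗ₜ[k] (1 : A)) * e = e * ((1 : A) ⊗ₜ[k] a))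
    (hl : (TensorProduct.lid k A) ((TensorProduct.map ε LinearMap.id) e) = 1)
    (hr : (TensorProduct.rid k A) ((TensorProduct.map LinearMap.id ε) e) = 1)
    (hω : IsUnit (LinearMap.mul' k A e)) :
    ∃ f : A ⊗[k] A,
      (∀ a : A, (a ⊗ₜ[k] (1 : A)) * f = f * ((1 : A) ⊗ₜ[k] a)) ∧
      LinearMap.mul' k A f = 1 := by
  set ω := LinearMap.mul' k A e with hωdef
  have hcomm : ∀ a : A, a * ω = ω * a := by
    intro a
    calc a * ω = LinearMap.mul' k A ((a ⊗ₜ[k] (1 : A)) * e) := (mul'_left_mul a e).symm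
    _ = LinearMap.mul' k A (e * ((1 : A) ⊗ₜ[k] a)) := by rw [he]
    _ = ω * a := mul'_right_mul a e
  set u : A := ↑hω.unit⁻¹ with hu
  have huω : u * ω = 1 := hω.val_inv_mul
  have hωu : ω * u = 1 := hω.mul_val_inv
  have hucomm : ∀ a : A, u * a = a * u := by
    intro a
    calc u * a = u * a * (ω * u) := by rw [hωu, mul_one]
    _ = u * (a * ω) * u := by simp [mul_assoc]
    _ = u * (ω * a) * u := by rw [hcomm]
    _ = (u * ω) * (a * u) := by simp [mul_assoc]
    _ = a * u := by rw [huω, one_mul]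
  refine ⟨(u ⊗ₜ[k] (1 : A)) * e, ?_, ?_⟩
  · intro a
    calc (a ⊗ₜ[k] (1 : A)) * ((u ⊗ₜ[k] (1 : A)) * e)
        = ((a * u) ⊗ₜ[k] (1 : A)) * e := by
          rw [← mul_assoc, Algebra.TensorProduct.tmul_mul_tmul, mul_one]
    _ = ((u * a) ⊗ₜ[k] (1 : A)) * e := by rw [hucomm]
    _ = (u ⊗ₜ[k] (1 : A)) * ((a ⊗ₜ[k] (1 : A)) * e) := by
          rw [← mul_assoc, Algebra.TensorProduct.tmul_mul_tmul, mul_one]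
    _ = (u ⊗ₜ[k] (1 : A)) * e * ((1 : A) ⊗ₜ[k] a) := by rw [he, mul_assoc]
  · rw [mul'_left_mul, ← hωdef, huω]
end

section
/- Let k be a commutative ring, G a finite group, and σ: G×G → kˣ a normalized 2-cocycle, i.e. σ(g,1) = σ(1,g) = 1 for all g ∈ G and σ(h,l)σ(g,hl) = σ(g,h)σ(gh,l) for all g,h,l ∈ G. Define, for i,j,u,v ∈ G, x^{ij}_{uv} := δ_{j, ui⁻¹v} · σ(iu⁻¹, ui⁻¹)⁻¹ σ(iu⁻¹, u) σ(ui⁻¹, v) ∈ k, where δ_{j, ui⁻¹v} is 1 if j = ui⁻¹v and 0 otherwise. Then this family satisfies, for all i,j,l,u,v,w ∈ G: Σ_{g∈G} x^{ij}_{ug}x^{gl}_{vw} = Σ_{g∈G} x^{jl}_{vg}x^{ig}_{uw} = Σ_{g∈G} x^{il}_{gw}x^{gj}_{uv} (i.e. the corresponding endomorphism R of k^G⊗k^G is a solution of the FS-equation). Moreover, if n = |G| is invertible in k, then Σ_{g∈G} x^{gj}_{ig} = n·δ_{ij} for all i,j ∈ G, so n⁻¹R is a solution of the S-equation. -/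
set_option maxHeartbeats 4000000 in
/-- Let `σ : G × G → kˣ` be a normalized 2-cocycle on a finite group `G`, and set
`x^{ij}_{uv} = δ_{j, ui⁻¹v} σ(iu⁻¹, ui⁻¹)⁻¹ σ(iu⁻¹, u) σ(ui⁻¹, v)`.
Then the family `x` satisfies the FS-equation in matrix form, and moreover
`Σ_g x^{gj}_{ig} = |G|·δ_{ij}` (so that `|G|⁻¹ R` is a solution of the S-equation
whenever `|G|` is invertible in `k`). -/
theorem cocycle_gives_FS_solution
    {k G : Type*} [CommRing k] [Group G] [Fintype G] [DecidableEq G]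
    (σ : G → G → kˣ)
    (hnorm : ∀ g : G, σ g 1 = 1 ∧ σ 1 g = 1)
    (hcoc : ∀ g h l : G, σ h l * σ g (h * l) = σ g h * σ (g * h) l)
    (x : G → G → G → G → k)
    (hx : ∀ i j u v : G,
      x i j u v = (if j = u * i⁻¹ * v then (1 : k) else 0) *
        (((σ (i * u⁻¹) (u * i⁻¹))⁻¹ : kˣ) * (σ (i * u⁻¹) u : kˣ) * (σ (u * i⁻¹) v : kˣ) : kˣ)) :
    (∀ i j l u v w : G,
      (∑ g : G, x i j u g * x g l v w = ∑ g : G, x j l v g * x i g u w) ∧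
      (∑ g : G, x j l v g * x i g u w = ∑ g : G, x i l g w * x g j u v)) ∧
    (∀ i j : G,
      ∑ g : G, x g j i g =
        (Fintype.card G : k) * (if i = j then (1 : k) else 0)) := by
  have hck : ∀ g h l gh hl : G, g * h = gh → h * l = hl →
      ((σ h l : kˣ) : k) * ((σ g hl : kˣ) : k) = ((σ g h : kˣ) : k) * ((σ gh l : kˣ) : k) := by
    intro g h l gh hl e1 e2
    subst e1; subst e2
    exact_mod_cast congrArg Units.val (hcoc g h l)
  have hik : ∀ p q : G, ((σ p q : kˣ) : k) * (((σ p q)⁻¹ : kˣ) : k) = 1 := fun p q =>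
    (σ p q).mul_inv
  have hn1 : ∀ g : G, ((σ g 1 : kˣ) : k) = 1 := fun g => by
    rw [(hnorm g).1, Units.val_one]
  have hn2 : ∀ g : G, ((σ 1 g : kˣ) : k) = 1 := fun g => by
    rw [(hnorm g).2, Units.val_one]
  have hxe : ∀ i j u v : G, j = u * i⁻¹ * v →
      x i j u v = (((σ (i * u⁻¹) (u * i⁻¹))⁻¹ : kˣ) : k) * ((σ (i * u⁻¹) u : kˣ) : k) *
        ((σ (u * i⁻¹) v : kˣ) : k) := by
    intro i j u v h
    rw [hx, if_pos h, one_mul]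
    push_cast
    ring
  have hx0 : ∀ i j u v : G, ¬(j = u * i⁻¹ * v) → x i j u v = 0 := by
    intro i j u v h
    rw [hx, if_neg h, zero_mul]
  refine ⟨?_, ?_⟩
  · intro i j l u v w
    by_cases hP : l = v * j⁻¹ * (u * i⁻¹ * w)
    · subst hP
      have e1 : (∑ g : G, x i j u g * x g (v * j⁻¹ * (u * i⁻¹ * w)) v w) =
          x i j u (i * u⁻¹ * j) * x (i * u⁻¹ * j) (v * j⁻¹ * (u * i⁻¹ * w)) v w :=
        Finset.sum_eq_single _
          (fun g _ hg => by
            rw [hx0 i j u g fun hc => hg (by rw [hc]; group), zero_mul])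
          (fun hmem => absurd (Finset.mem_univ _) hmem)
      have e2 : (∑ g : G, x j (v * j⁻¹ * (u * i⁻¹ * w)) v g * x i g u w) =
          x j (v * j⁻¹ * (u * i⁻¹ * w)) v (j * v⁻¹ * (v * j⁻¹ * (u * i⁻¹ * w))) * x i (j * v⁻¹ * (v * j⁻¹ * (u * i⁻¹ * w))) u w :=
        Finset.sum_eq_single _
          (fun g _ hg => by
            rw [hx0 j (v * j⁻¹ * (u * i⁻¹ * w)) v g fun hc => hg (by rw [hc]; group), zero_mul])
          (fun hmem => absurd (Finset.mem_univ _) hmem)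
      have e3 : (∑ g : G, x i (v * j⁻¹ * (u * i⁻¹ * w)) g w * x g j u v) =
          x i (v * j⁻¹ * (u * i⁻¹ * w)) (v * j⁻¹ * (u * i⁻¹ * w) * w⁻¹ * i) w * x (v * j⁻¹ * (u * i⁻¹ * w) * w⁻¹ * i) j u v :=
        Finset.sum_eq_single _
          (fun g _ hg => by
            rw [hx0 i (v * j⁻¹ * (u * i⁻¹ * w)) g w fun hc => hg (by rw [hc]; group), zero_mul])
          (fun hmem => absurd (Finset.mem_univ _) hmem)
      constructor
      · rw [e1, e2, hxe i j u (i * u⁻¹ * j) (by group),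
          hxe (i * u⁻¹ * j) (v * j⁻¹ * (u * i⁻¹ * w)) v w (by group),
          hxe j (v * j⁻¹ * (u * i⁻¹ * w)) v (j * v⁻¹ * (v * j⁻¹ * (u * i⁻¹ * w))) (by group),
          hxe i (j * v⁻¹ * (v * j⁻¹ * (u * i⁻¹ * w))) u w (by group)]
        simp only [mul_assoc, mul_inv_rev, inv_inv, one_mul, mul_one, inv_mul_cancel_left,
        mul_inv_cancel_left, mul_inv_cancel, inv_mul_cancel, inv_one]
        linear_combination ((σ (i * u⁻¹) u : kˣ) : k) * ((σ (i * u⁻¹) (u * i⁻¹) : kˣ) : k) * ((σ (j * v⁻¹) (v * j⁻¹) : kˣ) : k) * ((σ (v * (j⁻¹ * (u * i⁻¹))) w : kˣ) : k) * (((σ (i * u⁻¹) (u * i⁻¹))⁻¹ : kˣ) : k) * (((σ (i * u⁻¹) (u * i⁻¹))⁻¹ : kˣ) : k) * (((σ (i * (u⁻¹ * (j * v⁻¹))) (v * (j⁻¹ * (u * i⁻¹))))⁻¹ : kˣ) : k) * (((σ (j * v⁻¹) (v * j⁻¹))⁻¹ : kˣ) : k) * (hck (u * i⁻¹) (i * (u⁻¹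 * (j * v⁻¹))) v (j * v⁻¹) (i * (u⁻¹ * j)) (by group) (by group)) - ((σ (i * u⁻¹) u : kˣ) : k) * ((σ (i * u⁻¹) (u * i⁻¹) : kˣ) : k) * ((σ (j * v⁻¹) v : kˣ) : k) * ((σ (j * v⁻¹) (v * j⁻¹) : kˣ) : k) * ((σ (u * i⁻¹) (i * (u⁻¹ * (j * v⁻¹))) : kˣ) : k) * ((σ (v * (j⁻¹ * (u * i⁻¹))) w : kˣ) : k) * (((σ (i * u⁻¹) (u * i⁻¹))⁻¹ : kˣ) : k) * (((σ (i * u⁻¹) (u * i⁻¹))⁻¹ : kˣ) : k) * (((σ (i * (u⁻¹ * (j * v⁻¹))) (v * (j⁻¹ * (u * i⁻¹))))⁻¹ : kˣ) : k) * (((σ (j * v⁻¹) (v * j⁻¹))⁻¹ : kˣ) : k) * (hn2 (u * i⁻¹)) - ((σ (i * u⁻¹) u : kˣ) : k) * ((σ (i * u⁻¹) (u * i⁻¹) : kˣ) : k) * ((σ (j * v⁻¹) v : kˣ) : k) * ((σ (u * i⁻¹) (i * (u⁻¹ * (j * v⁻¹))) : kˣ) : k) * ((σ (v * (j⁻¹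 * (u * i⁻¹))) w : kˣ) : k) * (((σ (i * u⁻¹) (u * i⁻¹))⁻¹ : kˣ) : k) * (((σ (i * u⁻¹) (u * i⁻¹))⁻¹ : kˣ) : k) * (((σ (i * (u⁻¹ * (j * v⁻¹))) (v * (j⁻¹ * (u * i⁻¹))))⁻¹ : kˣ) : k) * (((σ (j * v⁻¹) (v * j⁻¹))⁻¹ : kˣ) : k) * (hck (j * v⁻¹) (v * j⁻¹) (u * i⁻¹) (1 : G) (v * (j⁻¹ * (u * i⁻¹))) (by group) (by group)) - ((σ (i * u⁻¹) u : kˣ) : k) * ((σ (i * u⁻¹) (u * i⁻¹) : kˣ) : k) * ((σ (j * v⁻¹) v : kˣ) : k) * ((σ (j * v⁻¹) (v * (j⁻¹ * (u * i⁻¹))) : kˣ) : k) * ((σ (u * i⁻¹) (i * (u⁻¹ * (j * v⁻¹))) : kˣ) : k) * (((σ (i * u⁻¹) (u * i⁻¹))⁻¹ : kˣ) : k) * (((σ (i * u⁻¹) (u * i⁻¹))⁻¹ : kˣ) : k) * (((σ (i * (u⁻¹ * (j * v⁻¹))) (v * (j⁻¹ * (u * i⁻¹))))⁻¹ : kˣ)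 : k) * (((σ (j * v⁻¹) (v * j⁻¹))⁻¹ : kˣ) : k) * (hck (v * j⁻¹) (u * i⁻¹) w (v * (j⁻¹ * (u * i⁻¹))) (u * (i⁻¹ * w)) (by group) (by group)) - ((σ (i * u⁻¹) u : kˣ) : k) * ((σ (i * u⁻¹) (u * i⁻¹) : kˣ) : k) * ((σ (j * v⁻¹) v : kˣ) : k) * ((σ (u * i⁻¹) w : kˣ) : k) * ((σ (v * j⁻¹) (u * (i⁻¹ * w)) : kˣ) : k) * (((σ (i * u⁻¹) (u * i⁻¹))⁻¹ : kˣ) : k) * (((σ (i * u⁻¹) (u * i⁻¹))⁻¹ : kˣ) : k) * (((σ (i * (u⁻¹ * (j * v⁻¹))) (v * (j⁻¹ * (u * i⁻¹))))⁻¹ : kˣ) : k) * (((σ (j * v⁻¹) (v * j⁻¹))⁻¹ : kˣ) : k) * (hck (u * i⁻¹) (i * (u⁻¹ * (j * v⁻¹))) (v * (j⁻¹ * (u * i⁻¹))) (j * v⁻¹) (1 : G) (by group) (by group)) + ((σ (i * u⁻¹) u : kˣ) : k) * ((σ (i * u⁻¹) (u * i⁻¹) : kˣ) : k) * ((σ (i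 * (u⁻¹ * (j * v⁻¹))) (v * (j⁻¹ * (u * i⁻¹))) : kˣ) : k) * ((σ (j * v⁻¹) v : kˣ) : k) * ((σ (u * i⁻¹) w : kˣ) : k) * ((σ (v * j⁻¹) (u * (i⁻¹ * w)) : kˣ) : k) * (((σ (i * u⁻¹) (u * i⁻¹))⁻¹ : kˣ) : k) * (((σ (i * u⁻¹) (u * i⁻¹))⁻¹ : kˣ) : k) * (((σ (i * (u⁻¹ * (j * v⁻¹))) (v * (j⁻¹ * (u * i⁻¹))))⁻¹ : kˣ) : k) * (((σ (j * v⁻¹) (v * j⁻¹))⁻¹ : kˣ) : k) * (hn1 (u * i⁻¹)) - ((σ (i * u⁻¹) u : kˣ) : k) * ((σ (i * (u⁻¹ * (j * v⁻¹))) v : kˣ) : k) * ((σ (u * i⁻¹) (i * (u⁻¹ * j)) : kˣ) : k) * ((σ (v * (j⁻¹ * (u * i⁻¹))) w : kˣ) : k) * (((σ (i * u⁻¹) (u * i⁻¹))⁻¹ : kˣ) : k) * (((σ (i * (u⁻¹ * (j * v⁻¹))) (v * (j⁻¹ * (u * i⁻¹))))⁻¹ : kˣ) : k) * (hik (i * u⁻¹)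 (u * i⁻¹)) - ((σ (i * u⁻¹) u : kˣ) : k) * ((σ (i * u⁻¹) (u * i⁻¹) : kˣ) : k) * ((σ (i * (u⁻¹ * (j * v⁻¹))) v : kˣ) : k) * ((σ (u * i⁻¹) (i * (u⁻¹ * j)) : kˣ) : k) * ((σ (v * (j⁻¹ * (u * i⁻¹))) w : kˣ) : k) * (((σ (i * u⁻¹) (u * i⁻¹))⁻¹ : kˣ) : k) * (((σ (i * u⁻¹) (u * i⁻¹))⁻¹ : kˣ) : k) * (((σ (i * (u⁻¹ * (j * v⁻¹))) (v * (j⁻¹ * (u * i⁻¹))))⁻¹ : kˣ) : k) * (hik (j * v⁻¹) (v * j⁻¹)) + ((σ (i * u⁻¹) u : kˣ) : k) * ((σ (j * v⁻¹) v : kˣ) : k) * ((σ (u * i⁻¹) w : kˣ) : k) * ((σ (v * j⁻¹) (u * (i⁻¹ * w)) : kˣ) : k) * (((σ (i * u⁻¹) (u * i⁻¹))⁻¹ : kˣ) : k) * (((σ (j * v⁻¹) (v * j⁻¹))⁻¹ : kˣ) : k) * (hik (i * u⁻¹) (u * i⁻¹)) + ((σ (i * u⁻¹) u : kˣ) : k)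 * ((σ (i * u⁻¹) (u * i⁻¹) : kˣ) : k) * ((σ (j * v⁻¹) v : kˣ) : k) * ((σ (u * i⁻¹) w : kˣ) : k) * ((σ (v * j⁻¹) (u * (i⁻¹ * w)) : kˣ) : k) * (((σ (i * u⁻¹) (u * i⁻¹))⁻¹ : kˣ) : k) * (((σ (i * u⁻¹) (u * i⁻¹))⁻¹ : kˣ) : k) * (((σ (j * v⁻¹) (v * j⁻¹))⁻¹ : kˣ) : k) * (hik (i * (u⁻¹ * (j * v⁻¹))) (v * (j⁻¹ * (u * i⁻¹))))
      · rw [e2, e3, hxe j (v * j⁻¹ * (u * i⁻¹ * w)) v (j * v⁻¹ * (v * j⁻¹ * (u * i⁻¹ * w))) (by group),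
          hxe i (j * v⁻¹ * (v * j⁻¹ * (u * i⁻¹ * w))) u w (by group),
          hxe i (v * j⁻¹ * (u * i⁻¹ * w)) (v * j⁻¹ * (u * i⁻¹ * w) * w⁻¹ * i) w (by group),
          hxe (v * j⁻¹ * (u * i⁻¹ * w) * w⁻¹ * i) j u v (by group)]
        simp only [mul_assoc, mul_inv_rev, inv_inv, one_mul, mul_one, inv_mul_cancel_left,
        mul_inv_cancel_left, mul_inv_cancel, inv_mul_cancel, inv_one]
        linear_combination ((σ (i * u⁻¹) u : kˣ) : k) * ((σ (i * (u⁻¹ * (j * v⁻¹))) (v * (j⁻¹ * (u * i⁻¹))) : kˣ) : k) * ((σ (j * v⁻¹) v : kˣ) : k) * ((σ (v * j⁻¹) (j * v⁻¹) : kˣ) : k) * (((σ (i * u⁻¹) (u * i⁻¹))⁻¹ : kˣ) : k) * (((σ (i * (u⁻¹ * (j * v⁻¹))) (v * (j⁻¹ * (u * i⁻¹))))⁻¹ : kˣ) : k) * (((σ (j * v⁻¹) (v * j⁻¹))⁻¹ : kˣ) : k) * (((σ (v * j⁻¹) (j * v⁻¹))⁻¹ : kˣ) : k) * (hck (v * j⁻¹)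 (u * i⁻¹) w (v * (j⁻¹ * (u * i⁻¹))) (u * (i⁻¹ * w)) (by group) (by group)) + ((σ (i * u⁻¹) u : kˣ) : k) * ((σ (j * v⁻¹) v : kˣ) : k) * ((σ (v * j⁻¹) (j * v⁻¹) : kˣ) : k) * ((σ (v * (j⁻¹ * (u * i⁻¹))) w : kˣ) : k) * (((σ (i * u⁻¹) (u * i⁻¹))⁻¹ : kˣ) : k) * (((σ (i * (u⁻¹ * (j * v⁻¹))) (v * (j⁻¹ * (u * i⁻¹))))⁻¹ : kˣ) : k) * (((σ (j * v⁻¹) (v * j⁻¹))⁻¹ : kˣ) : k) * (((σ (v * j⁻¹) (j * v⁻¹))⁻¹ : kˣ) : k) * (hck (i * (u⁻¹ * (j * v⁻¹))) (v * j⁻¹) (u * i⁻¹) (i * u⁻¹) (v * (j⁻¹ * (u * i⁻¹))) (by group) (by group)) - ((σ (i * u⁻¹) (u * i⁻¹) : kˣ) : k) * ((σ (j * v⁻¹) v : kˣ) : k) * ((σ (v * j⁻¹) (j * v⁻¹) : kˣ) : k) * ((σ (v * (j⁻¹ * (u * i⁻¹))) w : kˣ) : k) * (((σ (i * u⁻¹)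 (u * i⁻¹))⁻¹ : kˣ) : k) * (((σ (i * (u⁻¹ * (j * v⁻¹))) (v * (j⁻¹ * (u * i⁻¹))))⁻¹ : kˣ) : k) * (((σ (j * v⁻¹) (v * j⁻¹))⁻¹ : kˣ) : k) * (((σ (v * j⁻¹) (j * v⁻¹))⁻¹ : kˣ) : k) * (hck (i * (u⁻¹ * (j * v⁻¹))) (v * j⁻¹) u (i * u⁻¹) (v * (j⁻¹ * u)) (by group) (by group)) - ((σ (i * u⁻¹) (u * i⁻¹) : kˣ) : k) * ((σ (i * (u⁻¹ * (j * v⁻¹))) (v * (j⁻¹ * u)) : kˣ) : k) * ((σ (j * v⁻¹) v : kˣ) : k) * ((σ (v * j⁻¹) (j * v⁻¹) : kˣ) : k) * ((σ (v * j⁻¹) u : kˣ) : k) * ((σ (v * (j⁻¹ * (u * i⁻¹))) w : kˣ) : k) * (((σ (i * u⁻¹) (u * i⁻¹))⁻¹ : kˣ) : k) * (((σ (i * (u⁻¹ * (j * v⁻¹))) (v * (j⁻¹ * (u * i⁻¹))))⁻¹ : kˣ) : k) * (((σ (j * v⁻¹) (v * j⁻¹))⁻¹ : kˣ) : k) * (((σ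 (v * j⁻¹) (j * v⁻¹))⁻¹ : kˣ) : k) * (hn1 (j * v⁻¹)) + ((σ (i * u⁻¹) (u * i⁻¹) : kˣ) : k) * ((σ (i * (u⁻¹ * (j * v⁻¹))) (v * (j⁻¹ * u)) : kˣ) : k) * ((σ (j * v⁻¹) v : kˣ) : k) * ((σ (v * j⁻¹) u : kˣ) : k) * ((σ (v * (j⁻¹ * (u * i⁻¹))) w : kˣ) : k) * (((σ (i * u⁻¹) (u * i⁻¹))⁻¹ : kˣ) : k) * (((σ (i * (u⁻¹ * (j * v⁻¹))) (v * (j⁻¹ * (u * i⁻¹))))⁻¹ : kˣ) : k) * (((σ (j * v⁻¹) (v * j⁻¹))⁻¹ : kˣ) : k) * (((σ (v * j⁻¹) (j * v⁻¹))⁻¹ : kˣ) : k) * (hck (j * v⁻¹) (v * j⁻¹) (j * v⁻¹) (1 : G) (1 : G) (by group) (by group)) + ((σ (i * u⁻¹) (u * i⁻¹) : kˣ) : k) * ((σ (i * (u⁻¹ * (j * v⁻¹))) (v * (j⁻¹ * u)) : kˣ) : k) * ((σ (j * v⁻¹) v : kˣ) : k) * ((σ (j * v⁻¹) (v * j⁻¹)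 : kˣ) : k) * ((σ (v * j⁻¹) u : kˣ) : k) * ((σ (v * (j⁻¹ * (u * i⁻¹))) w : kˣ) : k) * (((σ (i * u⁻¹) (u * i⁻¹))⁻¹ : kˣ) : k) * (((σ (i * (u⁻¹ * (j * v⁻¹))) (v * (j⁻¹ * (u * i⁻¹))))⁻¹ : kˣ) : k) * (((σ (j * v⁻¹) (v * j⁻¹))⁻¹ : kˣ) : k) * (((σ (v * j⁻¹) (j * v⁻¹))⁻¹ : kˣ) : k) * (hn2 (j * v⁻¹)) - ((σ (i * u⁻¹) u : kˣ) : k) * ((σ (j * v⁻¹) v : kˣ) : k) * ((σ (u * i⁻¹) w : kˣ) : k) * ((σ (v * j⁻¹) (u * (i⁻¹ * w)) : kˣ) : k) * (((σ (i * u⁻¹) (u * i⁻¹))⁻¹ : kˣ) : k) * (((σ (j * v⁻¹) (v * j⁻¹))⁻¹ : kˣ) : k) * (hik (i * (u⁻¹ * (j * v⁻¹))) (v * (j⁻¹ * (u * i⁻¹)))) - ((σ (i * u⁻¹) u : kˣ) : k) * ((σ (i * (u⁻¹ * (j * v⁻¹))) (v * (j⁻¹ * (u * i⁻¹))) : kˣ)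 : k) * ((σ (j * v⁻¹) v : kˣ) : k) * ((σ (u * i⁻¹) w : kˣ) : k) * ((σ (v * j⁻¹) (u * (i⁻¹ * w)) : kˣ) : k) * (((σ (i * u⁻¹) (u * i⁻¹))⁻¹ : kˣ) : k) * (((σ (i * (u⁻¹ * (j * v⁻¹))) (v * (j⁻¹ * (u * i⁻¹))))⁻¹ : kˣ) : k) * (((σ (j * v⁻¹) (v * j⁻¹))⁻¹ : kˣ) : k) * (hik (v * j⁻¹) (j * v⁻¹)) + ((σ (i * (u⁻¹ * (j * v⁻¹))) (v * (j⁻¹ * u)) : kˣ) : k) * ((σ (j * v⁻¹) v : kˣ) : k) * ((σ (v * j⁻¹) u : kˣ) : k) * ((σ (v * (j⁻¹ * (u * i⁻¹))) w : kˣ) : k) * (((σ (i * (u⁻¹ * (j * v⁻¹))) (v * (j⁻¹ * (u * i⁻¹))))⁻¹ : kˣ) : k) * (((σ (v * j⁻¹) (j * v⁻¹))⁻¹ : kˣ) : k) * (hik (i * u⁻¹) (u * i⁻¹)) + ((σ (i * u⁻¹) (u * i⁻¹) : kˣ) : k) * ((σ (i * (u⁻¹ * (j * v⁻¹))) (v *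 (j⁻¹ * u)) : kˣ) : k) * ((σ (j * v⁻¹) v : kˣ) : k) * ((σ (v * j⁻¹) u : kˣ) : k) * ((σ (v * (j⁻¹ * (u * i⁻¹))) w : kˣ) : k) * (((σ (i * u⁻¹) (u * i⁻¹))⁻¹ : kˣ) : k) * (((σ (i * (u⁻¹ * (j * v⁻¹))) (v * (j⁻¹ * (u * i⁻¹))))⁻¹ : kˣ) : k) * (((σ (v * j⁻¹) (j * v⁻¹))⁻¹ : kˣ) : k) * (hik (j * v⁻¹) (v * j⁻¹))
    · have e1 : (∑ g : G, x i j u g * x g l v w) =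
          x i j u (i * u⁻¹ * j) * x (i * u⁻¹ * j) l v w :=
        Finset.sum_eq_single _
          (fun g _ hg => by
            rw [hx0 i j u g fun hc => hg (by rw [hc]; group), zero_mul])
          (fun hmem => absurd (Finset.mem_univ _) hmem)
      have e2 : (∑ g : G, x j l v g * x i g u w) =
          x j l v (j * v⁻¹ * l) * x i (j * v⁻¹ * l) u w :=
        Finset.sum_eq_single _
          (fun g _ hg => by
            rw [hx0 j l v g fun hc => hg (by rw [hc]; group), zero_mul])
          (fun hmem => absurd (Finset.mem_univ _) hmem)
      have e3 : (∑ g : G, x i l g w * x g j u v) =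
          x i l (l * w⁻¹ * i) w * x (l * w⁻¹ * i) j u v :=
        Finset.sum_eq_single _
          (fun g _ hg => by
            rw [hx0 i l g w fun hc => hg (by rw [hc]; group), zero_mul])
          (fun hmem => absurd (Finset.mem_univ _) hmem)
      have z1 : x (i * u⁻¹ * j) l v w = 0 :=
        hx0 (i * u⁻¹ * j) l v w fun hc => hP (by rw [hc]; group)
      have z2 : x i (j * v⁻¹ * l) u w = 0 :=
        hx0 i (j * v⁻¹ * l) u w fun hc => hP (by rw [← hc]; group)
      have z3 : x (l * w⁻¹ * i) j u v = 0 :=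
        hx0 (l * w⁻¹ * i) j u v fun hc => hP (by rw [hc]; group)
      refine ⟨?_, ?_⟩
      · rw [e1, e2, z1, z2, mul_zero, mul_zero]
      · rw [e2, e3, z2, z3, mul_zero, mul_zero]
  · intro i j
    by_cases hij : i = j
    · rw [← hij, if_pos rfl, mul_one]
      have h1 : ∀ g : G, x g i i g = 1 := by
        intro g
        rw [hxe g i i g (by group)]
        linear_combination (((σ (g * i⁻¹) (i * g⁻¹))⁻¹ : kˣ) : k) * (hck (g * i⁻¹) (i * g⁻¹) g (1 : G) i (by group) (by group)) + ((σ (g * i⁻¹) (i * g⁻¹) : kˣ) : k) * (((σ (g * i⁻¹) (i * g⁻¹))⁻¹ : kˣ) : k) * (hn2 g) + (1 : k) * (hik (g * i⁻¹) (i * g⁻¹))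
      rw [Finset.sum_congr rfl fun g _ => h1 g, Finset.sum_const, Finset.card_univ,
        nsmul_eq_mul, mul_one]
    · rw [if_neg hij, mul_zero,
        Finset.sum_congr rfl fun g _ => hx0 g j i g fun hc => hij (by rw [hc]; group),
        Finset.sum_const_zero]
end

section
/- Let k be a commutative ring, a ∈ k, n a positive integer, X = {1,…,n}, and θ: X×X×X → X a map satisfying, for all i,j,u,v ∈ X: θ(u,i,j) = v ⇔ θ(v,j,i) = u; θ(i,u,j) = v ⇔ θ(j,v,i) = u; θ(i,j,u) = v ⇔ θ(j,i,v) = u; and, for all i,j,p,u,v,w ∈ X: θ(i,j,p) = θ(u,v,w) ⇔ θ(j,i,u) = θ(p,w,v). Define x^{uv}_{ij} := a·δ^u_{θ(i,v,j)} (equal to a if u = θ(i,v,j) and 0 otherwise). Then this family satisfies, for all i,j,l,u,v,w ∈ X: Σ_k x^{ij}_{uk}x^{kl}_{vw} = Σ_k x^{jl}_{vk}x^{ik}_{uw} = Σ_k x^{il}_{kw}x^{kj}_{uv}, i.e. the corresponding endomorphism R of k^n⊗k^n is a solution of the FS-equation. -/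
/-- Given `θ : X³ → X` satisfying the four symmetry conditions, the family
`x^{uv}_{ij} = a·δ^u_{θ(i,v,j)}` satisfies the FS-equation in matrix form. -/
theorem theta_gives_FS_solution
    {k : Type*} [CommRing k] (a : k) {n : ℕ} (hn : 0 < n)
    (θ : Fin n → Fin n → Fin n → Fin n)
    (h1 : ∀ i j u v : Fin n, θ u i j = v ↔ θ v j i = u)
    (h2 : ∀ i j u v : Fin n, θ i u j = v ↔ θ j v i = u)
    (h3 : ∀ i j u v : Fin n, θ i j u = v ↔ θ j i v = u)
    (h4 : ∀ i j p u v w : Fin n, θ i j p = θ u v w ↔ θ j i u = θ p w v)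
    (x : Fin n → Fin n → Fin n → Fin n → k)
    (hx : ∀ u v i j : Fin n,
      x u v i j = a * (if u = θ i v j then (1 : k) else 0)) :
    ∀ i j l u v w : Fin n,
      (∑ p, x i j u p * x p l v w = ∑ p, x j l v p * x i p u w) ∧
      (∑ p, x j l v p * x i p u w = ∑ p, x i l p w * x p j u v) := by
  intro i j l u v w
  -- common condition
  set D : Prop := θ u j v = θ i w l with hD
  have c1 : (i = θ u j (θ v l w)) ↔ D := by
    rw [eq_comm, h3 u j (θ v l w) i, h4 j u i v l w, hD]
  have c2 : (i = θ u (θ l v j) w) ↔ D := by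
    rw [eq_comm, h2 u w (θ l v j) i, h4 w i u l v j]; exact eq_comm
  have c3 : (i = θ (θ u j v) l w) ↔ D := by
    rw [eq_comm, h1 l w (θ u j v) i, hD, eq_comm]
  have e2 : ∀ p : Fin n, (j = θ v l p) ↔ (p = θ l v j) := by
    intro p
    rw [eq_comm, h3 v l p j, eq_comm]
  classical
  have S1 : ∑ p, x i j u p * x p l v w = a * a * (if D then 1 else 0) := by
    simp_rw [hx]
    rw [Finset.sum_eq_single (θ v l w)]
    · rw [if_pos rfl, if_congr c1 rfl rfl]; ring
    · intro p _ hp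
      simp [hp]
    · intro h; exact absurd (Finset.mem_univ _) h
  have S2 : ∑ p, x j l v p * x i p u w = a * a * (if D then 1 else 0) := by
    simp_rw [hx]
    have : ∀ p : Fin n,
        (a * if j = θ v l p then (1:k) else 0) * (a * if i = θ u p w then (1:k) else 0)
        = (a * if p = θ l v j then (1:k) else 0) * (a * if i = θ u p w then (1:k) else 0) := by
      intro p; rw [if_congr (e2 p) rfl rfl]
    rw [Finset.sum_congr rfl fun p _ => this p]
    rw [Finset.sum_eq_single (θ l v j)]
    · rw [if_pos rfl, if_congr c2 rfl rfl]; ring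
    · intro p _ hp
      simp [hp]
    · intro h; exact absurd (Finset.mem_univ _) h
  have S3 : ∑ p, x i l p w * x p j u v = a * a * (if D then 1 else 0) := by
    simp_rw [hx]
    rw [Finset.sum_eq_single (θ u j v)]
    · rw [if_pos rfl, if_congr c3 rfl rfl]; ring
    · intro p _ hp
      simp [hp]
    · intro h; exact absurd (Finset.mem_univ _) h
  exact ⟨S1.trans S2.symm, S2.trans S3.symm⟩
end

section
/- Let A be a bialgebra over a commutative ring k, with comultiplication Δ(a) = Σ a₁⊗a₂ and counit ε. Let M be a left A-module which is also a right A-comodule via a k-linear coaction ρ: M → M⊗A, ρ(m) = Σ m₀⊗m₁, satisfying (ρ⊗I_A)∘ρ = (I_M⊗Δ)∘ρ and (I_M⊗ε)∘ρ = I_M, and suppose the FS-object compatibility condition holds: ρ(a·m) = Σ (a₁·m)⊗a₂ and ρ(a·m) = Σ m₀ ⊗ a·m₁ for all a ∈ A, m ∈ M. Then the module and comodule structures are trivial: a·m = ε(a)m and ρ(m) = m⊗1_A for all a ∈ A, m ∈ M. (Hence the forgetful functor from FS-objects over a bialgebra to k-modules is an isomorphism of categories.) -/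
open TensorProduct

variable {k A : Type*} [CommRing k] [Ring A] [Bialgebra k A]

/-- The action map `A ⊗ M → M`, `a ⊗ m ↦ a • m`. -/
noncomputable def actHom (M : Type*) [AddCommGroup M] [Module k M] [Module A M]
    [IsScalarTower k A M] [SMulCommClass A k M] : A ⊗[k] M →ₗ[k] M :=
  TensorProduct.lift (Algebra.lsmul k k M : A →ₐ[k] Module.End k M).toLinearMap

/-- The map `(A ⊗ A) ⊗ M → M ⊗ A` sending `(a₁ ⊗ a₂) ⊗ m` to `(a₁ • m) ⊗ a₂`. -/
noncomputable def sweedlerAct (M : Type*) [AddCommGroup M] [Module k M] [Module A M]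
    [IsScalarTower k A M] [SMulCommClass A k M] :
    (A ⊗[k] A) ⊗[k] M →ₗ[k] M ⊗[k] A :=
  (TensorProduct.comm k A M).toLinearMap ∘ₗ
    (TensorProduct.map LinearMap.id (actHom M)) ∘ₗ
    (TensorProduct.leftComm k A A M).toLinearMap ∘ₗ
    (TensorProduct.assoc k A A M).toLinearMap

/-- Over a bialgebra `A`, any FS-object `M` (a left `A`-module and right
`A`-comodule with `ρ(a·m) = Σ a₁·m ⊗ a₂ = Σ m₀ ⊗ a·m₁`) has trivial module and
comodule structures: `a·m = ε(a)m` and `ρ(m) = m ⊗ 1`. -/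
theorem FS_object_over_bialgebra_is_trivial
    (M : Type*) [AddCommGroup M] [Module k M] [Module A M]
    [IsScalarTower k A M] [SMulCommClass A k M]
    (ρ : M →ₗ[k] M ⊗[k] A)
    (hcoassoc : (TensorProduct.assoc k M A A).toLinearMap ∘ₗ
        (TensorProduct.map ρ LinearMap.id) ∘ₗ ρ =
      (TensorProduct.map LinearMap.id (Coalgebra.comul (R := k))) ∘ₗ ρ)
    (hcounit : ∀ m : M,
      (TensorProduct.rid k M)
        ((TensorProduct.map LinearMap.id (Coalgebra.counit (R := k))) (ρ m)) = m)
    (hcomp1 : ∀ (a : A) (m : M),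
      ρ (a • m) = sweedlerAct M ((Coalgebra.comul (R := k) a) ⊗ₜ[k] m))
    (hcomp2 : ∀ (a : A) (m : M),
      ρ (a • m) = (TensorProduct.map LinearMap.id (LinearMap.mulLeft k a)) (ρ m)) :
    (∀ (a : A) (m : M), a • m = (Coalgebra.counit (R := k) a) • m) ∧
    (∀ m : M, ρ m = m ⊗ₜ[k] (1 : A)) := by
  have h2 : ∀ m : M, ρ m = m ⊗ₜ[k] (1 : A) := by
    intro m
    have := hcomp1 1 m
    rw [one_smul] at this
    rw [this]
    simp [sweedlerAct, actHom, Bialgebra.comul_one, Algebra.TensorProduct.one_def]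
  refine ⟨?_, h2⟩
  intro a m
  have h := hcounit (a • m)
  rw [hcomp2 a m, h2 m] at h
  simpa using h.symm
end
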